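/- For every integer r ≥ 2, the generating series S_{3,a} of the 3-colored partitions of type 3.a satisfies S_{3,a} = H·(2q−1)/(q)_1 + 1. -/

import Mathlib

open PowerSeries Finset

/-- `l` is (the list of parts, in non-increasing order, of) an integer partition. -/
def IsPtn (l : List ℕ) : Prop := l.Pairwise (· ≥ ·) ∧ ∀ x ∈ l, 0 < x

/-- the smallest part of a partition (listed in non-increasing order). -/
def Kpart (l : List ℕ) : ℕ := l.getD (l.length - 1) 0

/-- the `k`-th smallest part of a partition (listed in non-increasing order). -/
def Ikpart (l : List ℕ) (k : ℕ) : ℕ := l.getD (l.length - k) 0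

/-- `H`, the generating series of the partition function. -/
noncomputable def Hq : PowerSeries ℚ :=
  PowerSeries.mk fun n => (Set.ncard {l : List ℕ | IsPtn l ∧ l.sum = n} : ℚ)

/-- `(q)_n = (1−q)(1−q²)⋯(1−qⁿ)`, with `(q)_0 = 1`. -/
noncomputable def qPoch (n : ℕ) : PowerSeries ℚ :=
  ∏ j ∈ Finset.range n, (1 - (X : PowerSeries ℚ) ^ (j + 1))

/-- generating series counting 3-colored partitions (triples of partitions) satisfying `P`,
by total size. -/
noncomputable def cseries (P : List ℕ → List ℕ → List ℕ → Prop) : PowerSeries ℚ :=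
  PowerSeries.mk fun n =>
    (Set.ncard {t : List ℕ × List ℕ × List ℕ |
        P t.1 t.2.1 t.2.2 ∧ t.1.sum + t.2.1.sum + t.2.2.sum = n} : ℚ)

/-- type 3.a: black and red parts non-empty, no green parts, `1 ≤ ℓ_r ≤ k−1`. -/
def Type3a (b rd g : List ℕ) : Prop :=
  IsPtn b ∧ IsPtn rd ∧ IsPtn g ∧ b ≠ [] ∧ rd ≠ [] ∧ g = [] ∧
    1 ≤ rd.length ∧ rd.length ≤ Kpart b - 1

/-!
Conjugating the red partition turns a type-3.a triple `(b, r, [])` into a pair `(b, s)` of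
nonempty partitions with every part of `s` smaller than the smallest part `k` of `b`
(`ℓ_r ≤ k - 1` becomes "the largest part of `s` is below `k`"). Gluing, `b ++ s` is a
partition of `n` together with a marked part size `k` that is not its smallest part.
Marking a part size `v` of a partition of `n` and deleting one copy of `v` leaves a partition
of `n - v`, so the partitions of `n` with a marked part size number `∑_{k<n} p(k)`; those
marked at their smallest part number `p(n)`. Hence the `q^n`-coefficient of `S_{3,a}` is
`∑_{k<n} p(k) - p(n)` for `n ≥ 1`, i.e. `S_{3,a} + H = q H / (1 - q) + 1`.
-/

open List

theorem IsPtn.nil : IsPtn [] := ⟨Pairwise.nil, by simp⟩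

theorem IsPtn.sublist {l l' : List ℕ} (hl : IsPtn l) (h : l' <+ l) : IsPtn l' :=
  ⟨hl.1.sublist h, fun x hx => hl.2 x (h.subset hx)⟩

theorem IsPtn.sum_pos {l : List ℕ} (hl : IsPtn l) (hne : l ≠ []) : 0 < l.sum := by
  obtain ⟨a, t, rfl⟩ := exists_cons_of_ne_nil hne
  have := hl.2 a mem_cons_self
  simp only [List.sum_cons]
  omega

theorem le_headD_of_pairwise {l : List ℕ} (hl : l.Pairwise (· ≥ ·)) {x : ℕ} (hx : x ∈ l) :
    x ≤ l.headD 0 := by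
  cases l with
  | nil => simp at hx
  | cons a t =>
    rcases mem_cons.mp hx with rfl | hx
    · simp
    · exact (pairwise_cons.mp hl).1 x hx

theorem headD_mem {s : List ℕ} (h : s ≠ []) : s.headD 0 ∈ s := by
  rw [headD_eq_head?_getD, head?_eq_some_head h]; exact head_mem h

theorem Kpart_eq_getLast {l : List ℕ} (hne : l ≠ []) : Kpart l = l.getLast hne := by
  have : l.length - 1 < l.length := by have := length_pos_iff.mpr hne; omega
  rw [Kpart, getD_eq_getElem l 0 this, getLast_eq_getElem]

theorem Kpart_mem {l : List ℕ} (hne : l ≠ []) : Kpart l ∈ l := by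
  rw [Kpart_eq_getLast hne]; exact getLast_mem hne

theorem Kpart_le {l : List ℕ} (hl : l.Pairwise (· ≥ ·)) {x : ℕ} (hx : x ∈ l) : Kpart l ≤ x := by
  rw [Kpart_eq_getLast (ne_nil_of_mem hx)]
  exact hl.rel_getLast hx

def ptns (n : ℕ) : Set (List ℕ) := {l | IsPtn l ∧ l.sum = n}

theorem ptns_finite (n : ℕ) : (ptns n).Finite := by
  rw [← Set.finite_coe_iff]
  refine Finite.of_injective (fun l : ptns n => (⟨(l.1 : Multiset ℕ),
      fun hi => l.2.1.2 _ (by simpa using hi), by simpa using l.2.2⟩ : Nat.Partition n)) ?_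
  rintro ⟨l₁, h₁⟩ ⟨l₂, h₂⟩ h
  simp only [Nat.Partition.mk.injEq, Multiset.coe_eq_coe] at h
  exact Subtype.ext (h.eq_of_pairwise' h₁.1.1 h₂.1.1)

theorem ptns_zero : ptns 0 = {[]} := by
  ext l
  refine ⟨fun hl => ?_, fun hl => ⟨hl ▸ IsPtn.nil, by simp [Set.mem_singleton_iff.mp hl]⟩⟩
  by_contra hne
  exact (hl.1.sum_pos hne).ne' hl.2

def conj (l : List ℕ) : List ℕ :=
  (List.range (l.headD 0)).map fun i => l.countP (i < ·)

@[simp] theorem length_conj (l : List ℕ) : (conj l).length = l.headD 0 := by simp [conj]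

theorem getElem_conj (l : List ℕ) {i : ℕ} (hi : i < (conj l).length) :
    (conj l)[i] = l.countP (i < ·) := by simp [conj]

theorem isPtn_conj (l : List ℕ) : IsPtn (conj l) := by
  refine ⟨pairwise_iff_getElem.mpr fun i j _ _ hij => ?_, fun x hx => ?_⟩
  · rw [getElem_conj, getElem_conj]
    exact countP_mono_left fun x _ h => by simp only [decide_eq_true_eq] at *; omega
  · obtain ⟨i, hi, rfl⟩ := by simpa [conj] using hx
    cases l with
    | nil => simp at hi
    | cons a t => exact countP_pos_iff.mpr ⟨a, mem_cons_self, by simpa using hi⟩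

theorem sum_countP_lt {l : List ℕ} {B : ℕ} (hB : ∀ x ∈ l, x ≤ B) :
    ∑ i ∈ Finset.range B, l.countP (i < ·) = l.sum := by
  induction l with
  | nil => simp
  | cons a l ih =>
    simp only [countP_cons, List.sum_cons, Finset.sum_add_distrib, decide_eq_true_eq,
      Finset.sum_boole]
    rw [ih fun x hx => hB x (mem_cons_of_mem a hx), add_comm]
    have : (Finset.range B).filter (· < a) = Finset.range a := by
      ext i; have := hB a mem_cons_self; simp; omega
    simp [this]

theorem sum_conj {l : List ℕ} (hl : l.Pairwise (· ≥ ·)) : (conj l).sum = l.sum := by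
  have : (conj l).sum = ∑ i ∈ Finset.range (l.headD 0), l.countP (i < ·) := rfl
  rw [this, sum_countP_lt fun x hx => le_headD_of_pairwise hl hx]

theorem headD_conj {l : List ℕ} (hl : ∀ x ∈ l, 0 < x) : (conj l).headD 0 = l.length := by
  cases l with
  | nil => simp [conj]
  | cons a t =>
    obtain ⟨b, rfl⟩ : ∃ b, a = b + 1 := ⟨a - 1, by have := hl a mem_cons_self; omega⟩
    simpa [conj, range_succ_eq_map, countP_eq_length] using
      fun x hx => hl x (mem_cons_of_mem _ hx)

theorem conj_eq_nil_iff {l : List ℕ} (hl : IsPtn l) : conj l = [] ↔ l = [] := by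
  rw [← length_eq_zero_iff, length_conj]
  cases l with
  | nil => simp
  | cons a t => simpa using (hl.2 a mem_cons_self).ne'

theorem lt_countP_lt_iff {l : List ℕ} (hl : l.Pairwise (· ≥ ·)) (i : ℕ) {j : ℕ}
    (hj : j < l.length) : j < l.countP (i < ·) ↔ i < l[j] := by
  induction l generalizing j with
  | nil => simp at hj
  | cons a l ih =>
    obtain ⟨hle, hl⟩ := pairwise_cons.mp hl
    by_cases hia : i < a
    · cases j with
      | zero => simp [hia]
      | succ j => simpa [countP_cons, hia] using ih hl (by simpa using hj)
    · have hz : l.countP (i < ·) = 0 := countP_eq_zero.mpr fun x hx => by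
        have := hle x hx; simp; omega
      cases j with
      | zero => simp [hz, hia]
      | succ j =>
        have := hle _ (getElem_mem (by simpa using hj : j < l.length))
        simp [hia, hz]; omega

theorem countP_range_lt (m n : ℕ) : (List.range n).countP (· < m) = min m n := by
  induction n with
  | zero => simp
  | succ n ih =>
    rw [range_succ, countP_append, ih]
    by_cases h : n < m <;> simp [h] <;> omega

theorem conj_conj {l : List ℕ} (hl : IsPtn l) : conj (conj l) = l := by
  refine ext_getElem (by rw [length_conj, headD_conj hl.2]) fun j h₁ h₂ => ?_
  rw [getElem_conj, conj, countP_map,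
    countP_congr (q := (· < l[j])) fun i _ => by simpa using lt_countP_lt_iff hl.1 i h₂,
    countP_range_lt, min_eq_left (le_headD_of_pairwise hl.1 (getElem_mem h₂))]

def markedPtns (n : ℕ) : Set (List ℕ × ℕ) := {p | IsPtn p.1 ∧ p.1.sum = n ∧ p.2 ∈ p.1}

theorem markedPtns_eq_biUnion (n : ℕ) :
    markedPtns n = ⋃ k ∈ Finset.range n,
      (fun μ => (μ.orderedInsert (· ≥ ·) (n - k), n - k)) '' ptns k := by
  ext ⟨l, v⟩
  simp only [markedPtns, ptns, Set.mem_ofPred_eq, Set.mem_iUnion, Set.mem_image, Prod.mk.injEq,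
    Finset.mem_range]
  constructor
  · rintro ⟨hl, rfl, hv⟩
    have hsum := (perm_cons_erase hv).sum_eq
    have hvpos := hl.2 v hv
    rw [List.sum_cons] at hsum
    refine ⟨l.sum - v, by omega, l.erase v, ⟨hl.sublist (erase_sublist), by omega⟩, ?_, by omega⟩
    rw [show l.sum - (l.sum - v) = v by omega, orderedInsert_erase v l hv hl.1]
  · rintro ⟨k, hk, μ, ⟨hμ, hsum⟩, rfl, rfl⟩
    have hperm := perm_orderedInsert (· ≥ ·) (n - k) μ
    refine ⟨⟨hμ.1.orderedInsert _ _, fun x hx => ?_⟩, ?_, hperm.mem_iff.mpr mem_cons_self⟩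
    · rcases mem_cons.mp (hperm.mem_iff.mp hx) with rfl | hx
      · omega
      · exact hμ.2 x hx
    · rw [hperm.sum_eq, List.sum_cons]; omega

theorem markedPtns_finite (n : ℕ) : (markedPtns n).Finite := by
  rw [markedPtns_eq_biUnion]
  exact (Finset.finite_toSet _).biUnion fun k _ => (ptns_finite k).image _

theorem ncard_markedPtns (n : ℕ) :
    (markedPtns n).ncard = ∑ k ∈ Finset.range n, (ptns k).ncard := by
  have hdisj : (Finset.range n : Set ℕ).PairwiseDisjoint
      fun k => (fun μ => (μ.orderedInsert (· ≥ ·) (n - k), n - k)) '' ptns k := by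
    intro k hk k' hk' hne
    simp only [Finset.coe_range, Set.mem_Iio] at hk hk'
    refine Set.disjoint_left.mpr ?_
    rintro _ ⟨μ, -, rfl⟩ ⟨μ', -, h⟩
    exact hne (by simp only [Prod.mk.injEq] at h; omega)
  rw [markedPtns_eq_biUnion, ← Finset.set_biUnion_coe,
    Set.Finite.ncard_biUnion (Finset.finite_toSet _) (fun k _ => (ptns_finite k).image _) hdisj,
    finsum_mem_coe_finset]
  refine Finset.sum_congr rfl fun k _ => Set.ncard_image_of_injective _ fun μ μ' h => ?_
  simpa [erase_orderedInsert] using congrArg (fun p => p.1.erase (n - k)) h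

theorem filter_le_append_filter_lt {l : List ℕ} (hl : l.Pairwise (· ≥ ·)) (v : ℕ) :
    l.filter (v ≤ ·) ++ l.filter (· < v) = l := by
  refine Perm.eq_of_pairwise' ?_ hl ?_
  · refine pairwise_append.mpr ⟨hl.filter _, hl.filter _, fun a ha b hb => ?_⟩
    simp only [List.mem_filter, decide_eq_true_eq] at ha hb
    omega
  · convert filter_append_perm (v ≤ ·) l using 3
    funext x
    simp only [← decide_not, not_le]

theorem Kpart_filter_le {l : List ℕ} (hl : l.Pairwise (· ≥ ·)) {v : ℕ} (hv : v ∈ l) :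
    Kpart (l.filter (v ≤ ·)) = v := by
  have hvf : v ∈ l.filter (v ≤ ·) := List.mem_filter.mpr ⟨hv, by simp⟩
  refine le_antisymm (Kpart_le (hl.filter _) hvf) ?_
  simpa using (List.mem_filter.mp (Kpart_mem (ne_nil_of_mem hvf))).2

/-- Since `s` is non-increasing, `s.headD 0 < Kpart b` says that every part of `s` is smaller
than every part of `b`. -/
def splitPairs (n : ℕ) : Set (List ℕ × List ℕ) :=
  {p | IsPtn p.1 ∧ IsPtn p.2 ∧ p.1 ≠ [] ∧ p.2 ≠ [] ∧ p.2.headD 0 < Kpart p.1 ∧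
    p.1.sum + p.2.sum = n}

theorem append_mem_markedPtns {n : ℕ} {b s : List ℕ} (h : (b, s) ∈ splitPairs n) :
    (b ++ s, Kpart b) ∈ markedPtns n \ {p | p.2 = Kpart p.1} := by
  obtain ⟨hb, hs, hbne, hsne, hhead, hsum⟩ := h
  have hslt : ∀ y ∈ s, y < Kpart b := fun y hy => (le_headD_of_pairwise hs.1 hy).trans_lt hhead
  have hsorted : (b ++ s).Pairwise (· ≥ ·) := pairwise_append.mpr
    ⟨hb.1, hs.1, fun x hx y hy => ((hslt y hy).trans_le (Kpart_le hb.1 hx)).le⟩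
  have hlast : Kpart (b ++ s) < Kpart b :=
    (Kpart_le hsorted (mem_append_right b (headD_mem hsne))).trans_lt hhead
  refine ⟨⟨⟨hsorted, fun x hx => ?_⟩, by rw [List.sum_append, hsum],
    mem_append_left s (Kpart_mem hbne)⟩, hlast.ne'⟩
  rcases mem_append.mp hx with hx | hx
  exacts [hb.2 x hx, hs.2 x hx]

theorem filter_mem_splitPairs {n v : ℕ} {l : List ℕ}
    (h : (l, v) ∈ markedPtns n \ {p | p.2 = Kpart p.1}) :
    (l.filter (v ≤ ·), l.filter (· < v)) ∈ splitPairs n := by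
  obtain ⟨⟨hl, hsum, hv⟩, hvK⟩ := h
  have hKv : Kpart l < v := (Kpart_le hl.1 hv).lt_of_ne (Ne.symm hvK)
  have hsne : l.filter (· < v) ≠ [] :=
    ne_nil_of_mem (List.mem_filter.mpr ⟨Kpart_mem (ne_nil_of_mem hv), by simpa using hKv⟩)
  refine ⟨hl.sublist (filter_sublist), hl.sublist (filter_sublist),
    ne_nil_of_mem (List.mem_filter.mpr ⟨hv, by simp⟩), hsne, ?_, ?_⟩
  · rw [Kpart_filter_le hl.1 hv]
    simpa using (List.mem_filter.mp (headD_mem hsne)).2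
  · rw [← List.sum_append, filter_le_append_filter_lt hl.1, hsum]

theorem ncard_splitPairs (n : ℕ) :
    (splitPairs n).ncard = (markedPtns n \ {p | p.2 = Kpart p.1}).ncard := by
  refine Set.BijOn.ncard_eq (f := fun p => (p.1 ++ p.2, Kpart p.1))
    (Set.InvOn.bijOn (f' := fun p => (p.1.filter (p.2 ≤ ·), p.1.filter (· < p.2))) ⟨?_, ?_⟩
      (fun p hp => append_mem_markedPtns hp) (fun p hp => filter_mem_splitPairs hp))
  · rintro ⟨b, s⟩ ⟨hb, hs, _, _, hhead, _⟩
    have hble : ∀ x ∈ b, Kpart b ≤ x := fun x hx => Kpart_le hb.1 hx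
    have hslt : ∀ y ∈ s, y < Kpart b := fun y hy => (le_headD_of_pairwise hs.1 hy).trans_lt hhead
    simp only [filter_append, Prod.mk.injEq]
    rw [List.filter_eq_self.mpr (by simpa using hble),
      List.filter_eq_nil_iff.mpr (by simpa using hslt),
      List.filter_eq_nil_iff.mpr (by simpa using hble),
      List.filter_eq_self.mpr (by simpa using hslt)]
    simp
  · rintro ⟨l, v⟩ ⟨⟨hl, -, hv⟩, -⟩
    simp only [filter_le_append_filter_lt hl.1, Kpart_filter_le hl.1 hv]

theorem ncard_markedPtns_inter_Kpart (n : ℕ) :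
    (markedPtns (n + 1) ∩ {p | p.2 = Kpart p.1}).ncard = (ptns (n + 1)).ncard := by
  refine Set.BijOn.ncard_eq (f := Prod.fst)
    (Set.InvOn.bijOn (f' := fun l => (l, Kpart l)) ⟨?_, ?_⟩ ?_ ?_)
  · rintro ⟨l, v⟩ ⟨-, hv⟩
    simp only [Set.mem_ofPred_eq] at hv
    simp [hv]
  · intro l _
    rfl
  · rintro ⟨l, v⟩ ⟨⟨hl, hsum, -⟩, -⟩
    exact ⟨hl, hsum⟩
  · rintro l ⟨hl, hsum⟩
    have hne : l ≠ [] := by rintro rfl; simp at hsum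
    exact ⟨⟨hl, hsum, Kpart_mem hne⟩, rfl⟩

def colored (P : List ℕ → List ℕ → List ℕ → Prop) (n : ℕ) : Set (List ℕ × List ℕ × List ℕ) :=
  {t | P t.1 t.2.1 t.2.2 ∧ t.1.sum + t.2.1.sum + t.2.2.sum = n}

theorem coeff_cseries (P : List ℕ → List ℕ → List ℕ → Prop) (n : ℕ) :
    coeff n (cseries P) = (colored P n).ncard :=
  coeff_mk _ _

theorem ncard_colored_Type3a (n : ℕ) : (colored Type3a n).ncard = (splitPairs n).ncard := by
  refine Set.BijOn.ncard_eq (f := fun t => (t.1, conj t.2.1))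
    (Set.InvOn.bijOn (f' := fun p => (p.1, conj p.2, [])) ⟨?_, ?_⟩ ?_ ?_)
  · rintro ⟨b, r, g⟩ ⟨⟨-, hr, -, -, -, rfl, -⟩, -⟩
    simp [conj_conj hr]
  · rintro ⟨b, s⟩ ⟨-, hs, -⟩
    simp [conj_conj hs]
  · rintro ⟨b, r, g⟩ ⟨⟨hb, hr, -, hbne, hrne, rfl, -, hlen⟩, hsum⟩
    refine ⟨hb, isPtn_conj r, hbne, (conj_eq_nil_iff hr).not.mpr hrne, ?_, ?_⟩
    · have := hb.2 _ (Kpart_mem hbne)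
      have := length_pos_iff.mpr hrne
      dsimp only at *
      rw [headD_conj hr.2]
      omega
    · simpa [sum_conj hr.1] using hsum
  · rintro ⟨b, s⟩ ⟨hb, hs, hbne, hsne, hhead, hsum⟩
    have hcne := (conj_eq_nil_iff hs).not.mpr hsne
    refine ⟨⟨hb, isPtn_conj s, IsPtn.nil, hbne, hcne, rfl, length_pos_iff.mpr hcne, ?_⟩, ?_⟩
    · dsimp only at hhead ⊢
      rw [length_conj]
      omega
    · simpa [sum_conj hs.1] using hsum

theorem ncard_colored_Type3a_add_ncard_ptns (n : ℕ) :
    (colored Type3a (n + 1)).ncard + (ptns (n + 1)).ncard =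
      ∑ k ∈ Finset.range (n + 1), (ptns k).ncard := by
  rw [ncard_colored_Type3a, ncard_splitPairs, ← ncard_markedPtns_inter_Kpart, add_comm,
    Set.ncard_inter_add_ncard_sdiff_eq_ncard _ _ (markedPtns_finite _), ncard_markedPtns]

theorem coeff_mul_mk_one {R : Type*} [CommSemiring R] (f : PowerSeries R) (n : ℕ) :
    coeff n (f * PowerSeries.mk 1) = ∑ k ∈ Finset.range (n + 1), coeff k f := by
  simp [coeff_mul, Finset.Nat.sum_antidiagonal_eq_sum_range_succ_mk]

theorem coeff_Hq (n : ℕ) : coeff n Hq = (ptns n).ncard :=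
  coeff_mk _ _

theorem cseries_Type3a_add_Hq : cseries Type3a + Hq = X * (Hq * PowerSeries.mk 1) + 1 := by
  ext (_ | n)
  · have : colored Type3a 0 = ∅ := Set.eq_empty_of_forall_notMem
      fun ⟨b, _, _⟩ ⟨⟨hb, _, _, hbne, _⟩, hsum⟩ => (hb.sum_pos hbne).ne' (by omega)
    simp only [map_add, coeff_cseries, coeff_Hq, this, ptns_zero, coeff_zero_X_mul, coeff_one,
      if_true, Set.ncard_empty, Set.ncard_singleton]
    norm_num
  · simp only [map_add, coeff_cseries, coeff_Hq, coeff_succ_X_mul, coeff_mul_mk_one,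
      coeff_one, Nat.add_one_ne_zero, if_false, add_zero]
    exact_mod_cast ncard_colored_Type3a_add_ncard_ptns n

theorem S3a_eq_general :
    cseries Type3a = Hq * (2 * (X : PowerSeries ℚ) - 1) * (qPoch 1)⁻¹ + 1 := by
  have hinv : (qPoch 1)⁻¹ = PowerSeries.mk 1 := by
    rw [qPoch, Finset.prod_range_one, zero_add, pow_one, eq_comm,
      eq_inv_iff_mul_eq_one (by simp), mk_one_mul_one_sub_eq_one]
  rw [hinv]
  linear_combination cseries_Type3a_add_Hq + Hq * mk_one_mul_one_sub_eq_one (S := ℚ)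

/-- `S_{3,a} = H·(2q−1)/(q)_1 + 1`. -/
theorem S3a_eq (r : ℕ) (hr : 2 ≤ r) :
    cseries Type3a = Hq * (2 * (X : PowerSeries ℚ) - 1) * (qPoch 1)⁻¹ + 1 :=
  S3a_eq_general
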